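/- arXiv:2501.02695 — 3 statements merged into one kernel-verified Lean document; each statement's English description precedes it below -/
import Mathlib

section
/- Let N ∈ ℕ and let A ⊆ [N]. Suppose the prime factorization graph G = G(A), with edge set E, contains no circuit of even length at most 2·N^{1/12} and no cycle of odd length at most N^{1/12} containing a vertex from P_□, where P_□ = {p prime : N^{1/3} < p ≤ N^{1/2} and p² ∣ a for some a ∈ A} and P_{¬□} = P_med \ P_□. Then there is a set of edges E' ⊆ E of size at most (|P_{¬□}| + 1)/2 such that the graph with edge set E \ E' contains no cycle of length at most N^{1/12}. -/
/-!
Every short cycle of `G(A)` (length at most `N^{1/12}`) is odd, since an even one would be an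
even circuit. Two distinct short cycles `C₁ ≠ C₂` share no vertex: otherwise some stretch of `C₂`
leaves `C₁` at a vertex `u` and comes back at a vertex `v`, and together with one of the two arcs
into which `u` and `v` cut the odd cycle `C₁` it closes up an even circuit of length at most
`2 N^{1/12}`.

Split the vertices by whether they are at most `√N`. An odd cycle has an edge whose endpoints
lie on the same side; two distinct primes above `√N` cannot both divide some `a ≤ N`, so both
endpoints are in `{1} ∪ P_med`, and even in `{1} ∪ P_{¬□}` because the cycle avoids `P_□`.
Deleting one such edge from every short cycle destroys them all, and since the short cycles are
vertex-disjoint the deleted edges form a matching on `{1} ∪ P_{¬□}`.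
-/

/-- A prime in `P_large ∪ P_med`. -/
def PLM (N : ℕ) (p : ℕ) : Prop :=
  p.Prime ∧ (N : ℝ) ^ ((1 : ℝ) / 3) < (p : ℝ) ∧ p ≤ N

/-- The vertex type is all of `ℕ`; only `1` and the primes of `P_large ∪ P_med` can be
non-isolated. -/
def pfGraph (N : ℕ) (A : Finset ℕ) : SimpleGraph ℕ where
  Adj x y := x ≠ y ∧
    ((x = 1 ∧ PLM N y ∧ ∃ a ∈ A, padicValNat y a = 1 ∧
        ∀ q, PLM N q → q ≠ y → padicValNat q a = 0) ∨
     (y = 1 ∧ PLM N x ∧ ∃ a ∈ A, padicValNat x a = 1 ∧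
        ∀ q, PLM N q → q ≠ x → padicValNat q a = 0) ∨
     (PLM N x ∧ PLM N y ∧ ∃ a ∈ A, x ∣ a ∧ y ∣ a))
  symm := by
    constructor
    intro x y ⟨hne, h⟩
    refine ⟨hne.symm, ?_⟩
    rcases h with h | h | ⟨hx, hy, a, ha, hxa, hya⟩
    · exact Or.inr (Or.inl h)
    · exact Or.inl h
    · exact Or.inr (Or.inr ⟨hy, hx, a, ha, hya, hxa⟩)
  loopless := ⟨fun x h => h.1 rfl⟩

def circuitEdgeList {V : Type*} (l : List V) : List (Sym2 V) :=
  (l.zip (l.rotate 1)).map fun p => s(p.1, p.2)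

def IsCircuit {V : Type*} (G : SimpleGraph V) (k : ℕ) (E : Set (Sym2 V)) : Prop :=
  ∃ l : List V, l.length = k ∧ l ≠ [] ∧
    (∀ p ∈ l.zip (l.rotate 1), G.Adj p.1 p.2) ∧
    (circuitEdgeList l).Nodup ∧
    E = {e | e ∈ circuitEdgeList l}

def IsCycle {V : Type*} (G : SimpleGraph V) (k : ℕ) (E : Set (Sym2 V)) : Prop :=
  ∃ l : List V, l.length = k ∧ l ≠ [] ∧ l.Nodup ∧
    (∀ p ∈ l.zip (l.rotate 1), G.Adj p.1 p.2) ∧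
    (circuitEdgeList l).Nodup ∧
    E = {e | e ∈ circuitEdgeList l}

/-- `P_□`. -/
def Psq (N : ℕ) (A : Finset ℕ) : Set ℕ :=
  {p : ℕ | p.Prime ∧ (N : ℝ) ^ ((1 : ℝ) / 3) < (p : ℝ) ∧ (p : ℝ) ≤ (N : ℝ) ^ ((1 : ℝ) / 2) ∧
    ∃ a ∈ A, p ^ 2 ∣ a}

/-- `P_med`. -/
def Pmed (N : ℕ) : Set ℕ :=
  {p : ℕ | p.Prime ∧ (N : ℝ) ^ ((1 : ℝ) / 3) < (p : ℝ) ∧ (p : ℝ) ≤ (N : ℝ) ^ ((1 : ℝ) / 2)}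

open SimpleGraph Finset

theorem List.isChain_iff_forall_mem_zip_tail {α : Type*} {R : α → α → Prop} :
    ∀ {l : List α}, l.IsChain R ↔ ∀ p ∈ l.zip l.tail, R p.1 p.2
  | [] => by simp
  | [a] => by simp
  | a :: b :: l => by
    simp [List.isChain_iff_forall_mem_zip_tail (l := b :: l)]

theorem List.zip_rotate_one_eq {α : Type*} {a : α} {l : List α} (h : l.head? = some a) :
    l.zip (l.rotate 1) = (l ++ [a]).zip (l ++ [a]).tail := by
  obtain ⟨t, rfl⟩ : ∃ t, l = a :: t := by cases l <;> simp_all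
  have := List.zip_append (l₁ := a :: t) (l₂ := t ++ [a]) (r₁ := [a]) (r₂ := []) (by simp)
  simp_all [List.rotate_cons_succ]

section

variable {V : Type*} {G : SimpleGraph V}

theorem circuitEdgeList_eq_edges {a : V} {l : List V}
    (h : l.head? = some a) (W : G.Walk a a) (hW : W.support = l ++ [a]) :
    circuitEdgeList l = W.edges := by
  rw [circuitEdgeList, List.zip_rotate_one_eq h, ← hW, Walk.edges_eq_zipWith_support, List.zip,
    List.map_zipWith]

theorem isCircuit_iff_exists_walk {k : ℕ} {E : Set (Sym2 V)} :
    IsCircuit G k E ↔ ∃ (a : V) (W : G.Walk a a), W.IsCircuit ∧ W.length = k ∧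
      E = {e | e ∈ W.edges} := by
  constructor
  · rintro ⟨l, rfl, hne, hadj, hnodup, rfl⟩
    obtain ⟨a, t, rfl⟩ := List.exists_cons_of_ne_nil hne
    have hhead : (a :: t).head? = some a := rfl
    have hchain : (a :: t ++ [a]).IsChain G.Adj := by
      rw [List.isChain_iff_forall_mem_zip_tail, ← List.zip_rotate_one_eq hhead]
      exact hadj
    let W : G.Walk a a := (Walk.ofSupport _ (by simp) hchain).copy (by simp) (by simp)
    have hW : W.support = a :: t ++ [a] :=
      (Walk.support_copy _ _ _).trans (Walk.support_ofSupport _ _)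
    have hlen : W.length = t.length + 1 := by
      simpa [hW] using W.length_support.symm
    have hedges := circuitEdgeList_eq_edges hhead W hW
    refine ⟨a, W, ⟨⟨hedges ▸ hnodup⟩, ?_⟩, by simpa using hlen, by rw [hedges]⟩
    intro h
    simp [h] at hlen
  · rintro ⟨a, W, hW, rfl, rfl⟩
    cases W with
    | nil => exact absurd rfl hW.ne_nil
    | cons hadj W' =>
      have hsupp : W'.support = W'.support.dropLast ++ [a] := by
        have := List.dropLast_append_getLast W'.support_ne_nil
        rwa [W'.getLast_support, eq_comm] at this
      have hhead : (a :: W'.support.dropLast).head? = some a := rfl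
      have hedges := circuitEdgeList_eq_edges hhead (W'.cons hadj) (by simp [← hsupp])
      refine ⟨_, ?_, List.cons_ne_nil _ _, ?_, hedges ▸ hW.edges_nodup, by rw [hedges]⟩
      · simp
      · rw [List.zip_rotate_one_eq hhead, ← List.isChain_iff_forall_mem_zip_tail,
          List.cons_append, ← hsupp, ← Walk.support_cons hadj]
        exact Walk.isChain_adj_support _

end

namespace SimpleGraph.Walk

variable {V : Type*} {G : SimpleGraph V}

theorem exists_eq_append_of_mem_support {x y : V} (c : G.Walk x y) :
    ∀ {a b : V} (w : G.Walk a b), b ∈ c.support →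
      ∃ v ∈ c.support, ∃ (p : G.Walk a v) (q : G.Walk v b),
        w = p.append q ∧ ∀ e ∈ p.edges, e ∉ c.edges
  | a, _, .nil, hb => ⟨a, hb, .nil, .nil, rfl, by simp⟩
  | a, b, .cons (v := m) hadj w, hb => by
    by_cases ha : a ∈ c.support
    · exact ⟨a, ha, .nil, _, rfl, by simp⟩
    obtain ⟨v, hv, p, q, rfl, hp⟩ := exists_eq_append_of_mem_support c w hb
    refine ⟨v, hv, .cons hadj p, q, rfl, ?_⟩
    intro e he
    rcases List.mem_cons.1 he with rfl | he
    · exact fun h => ha (c.fst_mem_support_of_mem_edges h)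
    · exact hp e he

theorem exists_isSubwalk_of_exists_edge_notMem {x y : V} (c : G.Walk x y) :
    ∀ {a b : V} (w : G.Walk a b), a ∈ c.support → b ∈ c.support →
      (∃ e ∈ w.edges, e ∉ c.edges) →
      ∃ u ∈ c.support, ∃ v ∈ c.support, ∃ p : G.Walk u v,
        p.IsSubwalk w ∧ ¬ p.Nil ∧ ∀ e ∈ p.edges, e ∉ c.edges
  | _, _, .nil, _, _, ⟨_, he, _⟩ => by simp at he
  | a, b, .cons (v := m) hadj w, ha, hb, hex => by
    by_cases hfirst : s(a, m) ∈ c.edges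
    · have hex' : ∃ e ∈ w.edges, e ∉ c.edges := by
        obtain ⟨e, he, hec⟩ := hex
        rcases List.mem_cons.1 he with rfl | he
        · exact absurd hfirst hec
        · exact ⟨e, he, hec⟩
      obtain ⟨u, hu, v, hv, p, hsub, hnil, hp⟩ := exists_isSubwalk_of_exists_edge_notMem c w
        (c.snd_mem_support_of_mem_edges hfirst) hb hex'
      exact ⟨u, hu, v, hv, p, hsub.cons hadj, hnil, hp⟩
    · obtain ⟨v, hv, p, q, rfl, hp⟩ := c.exists_eq_append_of_mem_support w hb
      refine ⟨a, ha, v, hv, .cons hadj p, isSubwalk_of_append_left rfl, by simp, ?_⟩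
      intro e he
      rcases List.mem_cons.1 he with rfl | he
      · exact hfirst
      · exact hp e he

theorem exists_even_isCircuit_of_theta {u v : V} (q₁ : G.Walk u v) (q₂ : G.Walk v u)
    (p : G.Walk u v) (hq₁ : q₁.IsTrail) (hq₂ : q₂.IsTrail) (hp : p.IsTrail) (hnil : ¬ p.Nil)
    (hodd : Odd (q₁.length + q₂.length)) (h₁ : q₁.edges.Disjoint p.edges)
    (h₂ : q₂.edges.Disjoint p.edges) :
    ∃ (w : V) (W : G.Walk w w), W.IsCircuit ∧ Even W.length ∧
      W.length ≤ q₁.length + q₂.length + p.length := by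
  by_cases heven : Even (q₁.length + p.length)
  · exact ⟨u, q₁.append p.reverse, ⟨by simpa [hq₁, hp] using h₁, by simp [eq_nil_iff_nil, hnil]⟩,
      by simpa using heven, by simp⟩
  · refine ⟨v, q₂.append p, ⟨by simpa [hq₂, hp] using h₂, by simp [eq_nil_iff_nil, hnil]⟩, ?_,
      by simp⟩
    simp only [length_append, Nat.even_iff, Nat.odd_iff] at hodd heven ⊢
    omega

theorem even_length_iff_of_forall_darts (P : V → Prop) {a b : V} (w : G.Walk a b)
    (hw : ∀ d ∈ w.darts, ¬(P d.fst ↔ P d.snd)) : Even w.length ↔ (P a ↔ P b) := by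
  induction w with
  | nil => simp
  | cons hadj w ih =>
    simp only [darts_cons, List.mem_cons, forall_eq_or_imp] at hw
    rw [length_cons, Nat.even_add_one, ih hw.2]
    have := hw.1
    tauto

theorem exists_dart_iff_of_odd (P : V → Prop) {u : V} (w : G.Walk u u) (hodd : Odd w.length) :
    ∃ d ∈ w.darts, (P d.fst ↔ P d.snd) := by
  by_contra h
  exact Nat.not_even_iff_odd.2 hodd
    ((even_length_iff_of_forall_darts P w fun d hd hP => h ⟨d, hd, hP⟩).2 Iff.rfl)

variable [DecidableEq V]

theorem IsCircuit.exists_even_of_odd {x y z : V} {c₁ : G.Walk x x} {c₂ : G.Walk y y}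
    (h₁ : c₁.IsCircuit) (h₂ : c₂.IsCircuit) (hodd : Odd c₁.length)
    (hz₁ : z ∈ c₁.support) (hz₂ : z ∈ c₂.support) (hne : ∃ e ∈ c₂.edges, e ∉ c₁.edges) :
    ∃ (w : V) (W : G.Walk w w), W.IsCircuit ∧ Even W.length ∧
      W.length ≤ c₁.length + c₂.length := by
  obtain ⟨e, he, hec⟩ := hne
  obtain ⟨u, hu, v, hv, p, hsub, hnil, hp⟩ :=
    c₁.exists_isSubwalk_of_exists_edge_notMem (c₂.rotate z hz₂) hz₁ hz₁
      ⟨e, (c₂.rotate_edges z hz₂).perm.mem_iff.2 he, hec⟩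
  -- If `u = v`, the first arc below is `nil` and the second is all of `c₁`.
  set c₁' := c₁.rotate u hu
  have hv' : v ∈ c₁'.support := (c₁.mem_support_rotate_iff u hu).2 hv
  have hc₁' : ∀ e, e ∈ c₁'.edges ↔ e ∈ c₁.edges := fun e => (c₁.rotate_edges u hu).perm.mem_iff
  have hsplit : (c₁'.takeUntil v hv').length + (c₁'.dropUntil v hv').length = c₁.length := by
    rw [← length_append, take_spec, length_rotate]
  have htrail : c₁'.IsTrail := h₁.isTrail.rotate hu
  obtain ⟨w, W, hW, heven, hlen⟩ := exists_even_isCircuit_of_theta _ _ p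
    (htrail.takeUntil hv') (htrail.dropUntil hv')
    (isTrail_of_isSubwalk hsub (h₂.isTrail.rotate hz₂)) hnil (hsplit ▸ hodd)
    (fun e he hep => hp e hep ((hc₁' e).1 (c₁'.edges_takeUntil_subset_edges hv' he)))
    (fun e he hep => hp e hep ((hc₁' e).1 (c₁'.edges_dropUntil_subset_edges hv' he)))
  have hplen : p.length ≤ c₂.length := (length_le_of_isSubwalk hsub).trans_eq (length_rotate ..)
  exact ⟨w, W, hW, heven, by omega⟩

end SimpleGraph.Walk

section

variable {V : Type*} [DecidableEq V]

theorem two_mul_card_le_of_pairwise_disjoint {s : Finset (Sym2 V)} {t : Finset V}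
    (hst : s ⊆ t.sym2) (hdiag : ∀ e ∈ s, ¬ e.IsDiag)
    (hdisj : (s : Set (Sym2 V)).Pairwise fun e f => ∀ x ∈ e, x ∉ f) : 2 * #s ≤ #t :=
  calc 2 * #s = ∑ e ∈ s, #e.toFinset := by
        rw [sum_congr rfl fun e he => Sym2.card_toFinset_of_not_isDiag e (hdiag e he)]
        simp [mul_comm]
    _ = #(s.biUnion Sym2.toFinset) := by
        refine (card_biUnion fun e he f hf hef => ?_).symm
        simpa [Finset.disjoint_left] using hdisj he hf hef
    _ ≤ #t := card_le_card <| biUnion_subset.2 fun e he x hx =>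
        mem_sym2_iff.1 (hst he) x (Sym2.mem_toFinset.1 hx)

theorem exists_finset_edges_hitting (G : SimpleGraph V) {C : Set (Set (Sym2 V))} (t : Finset V)
    (hC : C.Pairwise fun E F => ∀ e ∈ E, ∀ f ∈ F, ∀ x ∈ e, x ∉ f)
    (hgood : ∀ E ∈ C, ∃ e ∈ E, e ∈ G.edgeSet ∧ e ∈ t.sym2) :
    ∃ M : Finset (Sym2 V), ↑M ⊆ G.edgeSet ∧ 2 * #M ≤ #t ∧ ∀ E ∈ C, ∃ e ∈ E, e ∈ M := by
  classical
  choose f hfE hfG hft using fun E : C => hgood E E.2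
  refine ⟨t.sym2.filter (· ∈ Set.range f), ?_,
    two_mul_card_le_of_pairwise_disjoint (filter_subset _ _) ?_ ?_,
    fun E hE => ⟨f ⟨E, hE⟩, hfE ⟨E, hE⟩, mem_filter.2 ⟨hft _, _, rfl⟩⟩⟩
  · intro e he
    obtain ⟨-, E, rfl⟩ := mem_filter.1 he
    exact hfG E
  · intro e he
    obtain ⟨-, E, rfl⟩ := mem_filter.1 he
    exact G.not_isDiag_of_mem_edgeSet (hfG E)
  · intro e he e' he' hne
    obtain ⟨-, E, rfl⟩ := mem_filter.1 he
    obtain ⟨-, E', rfl⟩ := mem_filter.1 he'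
    exact hC E.2 E'.2 (fun h => hne (congrArg f (Subtype.ext h))) _ (hfE E) _ (hfE E')

end

section ShortCycles

variable {V : Type*} {G : SimpleGraph V} {k : ℕ} {E : Set (Sym2 V)}

theorem IsCycle.isCircuit (h : IsCycle G k E) : IsCircuit G k E :=
  let ⟨l, hl, hne, _, hadj, hnodup, hE⟩ := h
  ⟨l, hl, hne, hadj, hnodup, hE⟩

theorem IsCycle.mono {H : SimpleGraph V} (hGH : G ≤ H) (h : IsCycle G k E) : IsCycle H k E :=
  let ⟨l, hl, hne, hnd, hadj, hnodup, hE⟩ := h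
  ⟨l, hl, hne, hnd, fun p hp => hGH (hadj p hp), hnodup, hE⟩

theorem IsCycle.subset_edgeSet (h : IsCycle G k E) : E ⊆ G.edgeSet := by
  obtain ⟨l, -, -, -, hadj, -, rfl⟩ := h
  intro e he
  obtain ⟨p, hp, rfl⟩ := List.mem_map.1 he
  exact hadj p hp

def shortCycles (G : SimpleGraph V) (L : ℝ) : Set (Set (Sym2 V)) :=
  {E | ∃ k : ℕ, (k : ℝ) ≤ L ∧ IsCycle G k E}

variable {L : ℝ}

theorem odd_of_isCycle
    (hnoeven : ∀ k : ℕ, ∀ E : Set (Sym2 V), Even k → (k : ℝ) ≤ 2 * L → ¬ IsCircuit G k E)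
    (hk : (k : ℝ) ≤ L) (h : IsCycle G k E) : Odd k := by
  refine Nat.not_even_iff_odd.1 fun heven => hnoeven k E heven ?_ h.isCircuit
  have : (0 : ℝ) ≤ k := k.cast_nonneg
  linarith

theorem shortCycles_pairwise_disjoint [DecidableEq V]
    (hnoeven : ∀ k : ℕ, ∀ E : Set (Sym2 V), Even k → (k : ℝ) ≤ 2 * L → ¬ IsCircuit G k E) :
    (shortCycles G L).Pairwise fun E F => ∀ e ∈ E, ∀ f ∈ F, ∀ x ∈ e, x ∉ f := by
  suffices key : ∀ E ∈ shortCycles G L, ∀ F ∈ shortCycles G L, ¬ F ⊆ E →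
      ∀ e ∈ E, ∀ f ∈ F, ∀ x ∈ e, x ∉ f by
    intro E hE F hF hEF
    by_cases h : F ⊆ E
    · intro e he f hf x hxe hxf
      exact key F hF E hE (fun h' => hEF (h'.antisymm h)) f hf e he x hxf hxe
    · exact key E hE F hF h
  rintro E ⟨k, hk, hE⟩ F ⟨m, hm, hF⟩ hFE e he f hf x hxe hxf
  obtain ⟨a, W₁, hW₁, rfl, rfl⟩ := isCircuit_iff_exists_walk.1 hE.isCircuit
  obtain ⟨b, W₂, hW₂, rfl, rfl⟩ := isCircuit_iff_exists_walk.1 hF.isCircuit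
  obtain ⟨w, W, hW, heven, hlen⟩ := hW₁.exists_even_of_odd hW₂ (odd_of_isCycle hnoeven hk hE)
    (Walk.mem_support_iff_exists_mem_edges.2 (.inr ⟨e, he, hxe⟩))
    (Walk.mem_support_iff_exists_mem_edges.2 (.inr ⟨f, hf, hxf⟩)) (Set.not_subset.1 hFE)
  refine hnoeven _ _ heven ?_ (isCircuit_iff_exists_walk.2 ⟨w, W, hW, rfl, rfl⟩)
  have : (W.length : ℝ) ≤ W₁.length + W₂.length := by exact_mod_cast hlen
  linarith

end ShortCycles

theorem PLM.one_le {N p : ℕ} (hp : PLM N p) : 1 ≤ N :=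
  hp.1.one_lt.le.trans hp.2.2

theorem PLM.mem_Pmed {N p : ℕ} (hp : PLM N p) (h : (p : ℝ) ≤ (N : ℝ) ^ ((1 : ℝ) / 2)) :
    p ∈ Pmed N :=
  ⟨hp.1, hp.2.1, h⟩

theorem one_le_rpow_half {N : ℕ} (hN : 1 ≤ N) : (1 : ℝ) ≤ (N : ℝ) ^ ((1 : ℝ) / 2) :=
  Real.one_le_rpow (by exact_mod_cast hN) (by norm_num)

theorem le_rpow_half_or_le_of_dvd {N a p q : ℕ} (ha : a ∈ Set.Icc 1 N) (hp : p.Prime)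
    (hq : q.Prime) (hpq : p ≠ q) (hpa : p ∣ a) (hqa : q ∣ a) :
    (p : ℝ) ≤ (N : ℝ) ^ ((1 : ℝ) / 2) ∨ (q : ℝ) ≤ (N : ℝ) ^ ((1 : ℝ) / 2) := by
  by_contra! h
  have hdvd : p * q ∣ a := ((Nat.coprime_primes hp hq).2 hpq).mul_dvd_of_dvd_of_dvd hpa hqa
  have hle : ((p * q : ℕ) : ℝ) ≤ N := by exact_mod_cast (Nat.le_of_dvd ha.1 hdvd).trans ha.2
  rw [← Real.sqrt_eq_rpow] at h
  have := mul_lt_mul'' h.1 h.2 (Real.sqrt_nonneg _) (Real.sqrt_nonneg _)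
  rw [Real.mul_self_sqrt (Nat.cast_nonneg _)] at this
  push_cast at hle
  linarith

theorem pfGraph_mem_Pmed_of_adj {N : ℕ} {A : Finset ℕ} (hA : ↑A ⊆ Set.Icc 1 N) {x y : ℕ}
    (h : (pfGraph N A).Adj x y)
    (hxy : (x : ℝ) ≤ (N : ℝ) ^ ((1 : ℝ) / 2) ↔ (y : ℝ) ≤ (N : ℝ) ^ ((1 : ℝ) / 2)) :
    ∀ z ∈ s(x, y), z = 1 ∨ z ∈ Pmed N := by
  simp only [Sym2.mem_iff, forall_eq_or_imp, forall_eq]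
  obtain ⟨hne, ⟨rfl, hy, -⟩ | ⟨rfl, hx, -⟩ | ⟨hx, hy, a, ha, hxa, hya⟩⟩ := h
  · exact ⟨.inl rfl, .inr (hy.mem_Pmed (hxy.1 (by exact_mod_cast one_le_rpow_half hy.one_le)))⟩
  · exact ⟨.inr (hx.mem_Pmed (hxy.2 (by exact_mod_cast one_le_rpow_half hx.one_le))), .inl rfl⟩
  · have := le_rpow_half_or_le_of_dvd (hA ha) hx.1 hy.1 hne hxa hya
    exact ⟨.inr (hx.mem_Pmed (by tauto)), .inr (hy.mem_Pmed (by tauto))⟩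

theorem exists_edge_of_mem_shortCycles {N : ℕ} {A : Finset ℕ} (hA : ↑A ⊆ Set.Icc 1 N)
    (hnoeven : ∀ k : ℕ, ∀ E : Set (Sym2 ℕ), Even k → (k : ℝ) ≤ 2 * (N : ℝ) ^ ((1 : ℝ) / 12) →
      ¬ IsCircuit (pfGraph N A) k E)
    (hnoodd : ∀ k : ℕ, ∀ E : Set (Sym2 ℕ), Odd k → (k : ℝ) ≤ (N : ℝ) ^ ((1 : ℝ) / 12) →
      IsCycle (pfGraph N A) k E → ¬ ∃ p ∈ Psq N A, ∃ e ∈ E, p ∈ e)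
    {E : Set (Sym2 ℕ)} (hE : E ∈ shortCycles (pfGraph N A) ((N : ℝ) ^ ((1 : ℝ) / 12))) :
    ∃ e ∈ E, e ∈ (pfGraph N A).edgeSet ∧ ∀ x ∈ e, x = 1 ∨ x ∈ Pmed N \ Psq N A := by
  obtain ⟨k, hk, hcyc⟩ := hE
  have hodd := odd_of_isCycle hnoeven hk hcyc
  have hsq := hnoodd k E hodd hk hcyc
  obtain ⟨a, W, -, rfl, rfl⟩ := isCircuit_iff_exists_walk.1 hcyc.isCircuit
  obtain ⟨d, hd, hside⟩ :=
    W.exists_dart_iff_of_odd (fun x : ℕ => (x : ℝ) ≤ (N : ℝ) ^ ((1 : ℝ) / 2)) hodd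
  refine ⟨d.edge, List.mem_map_of_mem hd, d.edge_mem, fun x hx => ?_⟩
  rcases pfGraph_mem_Pmed_of_adj hA d.adj hside x hx with h | h
  · exact .inl h
  · exact .inr ⟨h, fun hx' => hsq ⟨x, hx', d.edge, List.mem_map_of_mem hd, hx⟩⟩

/-- If the prime factorization graph of `A ⊆ [N]` has no even circuit of length at most
`2·N^{1/12}` and no odd cycle of length at most `N^{1/12}` containing a vertex from
`P_□`, then one can delete at most `(|P_{¬□}| + 1)/2` edges so that no cycle of length at
most `N^{1/12}` remains. -/
theorem stmt13 (N : ℕ) (A : Finset ℕ) (hA : ↑A ⊆ Set.Icc 1 N)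
    (hnoeven : ∀ k : ℕ, ∀ E : Set (Sym2 ℕ), Even k → (k : ℝ) ≤ 2 * (N : ℝ) ^ ((1 : ℝ) / 12) →
      ¬ IsCircuit (pfGraph N A) k E)
    (hnoodd : ∀ k : ℕ, ∀ E : Set (Sym2 ℕ), Odd k → (k : ℝ) ≤ (N : ℝ) ^ ((1 : ℝ) / 12) →
      IsCycle (pfGraph N A) k E → ¬ ∃ p ∈ Psq N A, ∃ e ∈ E, p ∈ e) :
    ∃ E' : Set (Sym2 ℕ), E' ⊆ (pfGraph N A).edgeSet ∧ E'.Finite ∧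
      (E'.ncard : ℝ) ≤ (((Pmed N \ Psq N A).ncard : ℝ) + 1) / 2 ∧
      ∀ k : ℕ, ∀ E'' : Set (Sym2 ℕ), (k : ℝ) ≤ (N : ℝ) ^ ((1 : ℝ) / 12) →
        ¬ IsCycle ((pfGraph N A).deleteEdges E') k E'' := by
  have hfin : (Pmed N \ Psq N A).Finite :=
    (Set.finite_Iic ⌊(N : ℝ) ^ ((1 : ℝ) / 2)⌋₊).subset fun p hp => Nat.le_floor hp.1.2.2
  obtain ⟨M, hMG, hMcard, hhit⟩ := exists_finset_edges_hitting (pfGraph N A)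
    (insert 1 hfin.toFinset) (shortCycles_pairwise_disjoint hnoeven) fun E hE => by
      obtain ⟨e, heE, heG, he⟩ := exists_edge_of_mem_shortCycles hA hnoeven hnoodd hE
      exact ⟨e, heE, heG, mem_sym2_iff.2 fun x hx => by simpa using he x hx⟩
  refine ⟨M, hMG, M.finite_toSet, ?_, fun k E hk hcyc => ?_⟩
  · have ht : #(insert 1 hfin.toFinset) ≤ (Pmed N \ Psq N A).ncard + 1 := by
      rw [Set.ncard_eq_toFinset_card _ hfin]
      exact card_insert_le _ _
    rw [Set.ncard_coe_finset, le_div_iff₀ two_pos]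
    exact_mod_cast (by omega : #M * 2 ≤ (Pmed N \ Psq N A).ncard + 1)
  · obtain ⟨e, heE, heM⟩ := hhit E ⟨k, hk, hcyc.mono (deleteEdges_le _)⟩
    have he := hcyc.subset_edgeSet heE
    rw [edgeSet_deleteEdges] at he
    exact he.2 heM
end

section
/- Let N ∈ ℕ with N ≥ 4, and let T be any tree whose vertex set is the set of all primes ≤ N^{1/2}. Then the set A = {p : p prime, N^{1/2} < p ≤ N} ∪ {p² : p prime, p ≤ N^{1/2}} ∪ {p·q : {p,q} an edge of T} is a subset of [N] with distinct subset products, and |A| = π(N) + π(N^{1/2}) − 1. -/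
/-!
Write `E_B` for the edges of `T` whose product lies in `B`. In `∏ B` a prime `p > N^{1/2}` occurs
with exponent `1` or `0` according as `p ∈ B`, and a prime `p ≤ N^{1/2}` with exponent
`2·[p² ∈ B] + deg_{E_B} p`. So the product determines the degree parities of `E_B`. In a forest an
edge set is determined by its degree parities: every edge `uv` is a bridge, and summing the
degrees over the side of `u` counts, modulo `2`, exactly whether `uv` is in the set. Once `E_B`
is known, the product also determines which squares lie in `B`. The count is
`(π(N) - π(N^{1/2})) + π(N^{1/2}) + (π(N^{1/2}) - 1)`, a tree having one edge fewer than vertices.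
-/

open Finset

def DistinctSubsetProds (A : Set ℕ) : Prop :=
  ∀ B C : Finset ℕ, ↑B ⊆ A → ↑C ⊆ A → ∏ b ∈ B, b = ∏ c ∈ C, c → B = C

noncomputable def primePi (x : ℝ) : ℕ := {p : ℕ | p.Prime ∧ (p : ℝ) ≤ x}.ncard

namespace SimpleGraph

variable {V : Type*} [Fintype V] [DecidableEq V] {G : SimpleGraph V}

theorem IsBridge.exists_sum_card_incident_mod_two {u v : V} (h : G.IsBridge s(u, v)) :
    ∃ S : Finset V, ∀ D : Finset (Sym2 V), ↑D ⊆ G.edgeSet →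
      (∑ w ∈ S, #{e ∈ D | w ∈ e}) % 2 = if s(u, v) ∈ D then 1 else 0 := by
  classical
  set G' := G.deleteEdges {s(u, v)}
  set S : Finset V := {w | G'.Reachable u w}
  refine ⟨S, fun D hD => ?_⟩
  have hu : u ∈ S := by simp [S]
  have hv : v ∉ S := by simpa [S] using isBridge_iff.mp h
  have hcross : ∀ ⦃a b⦄, G.Adj a b → s(a, b) ≠ s(u, v) → (a ∈ S ↔ b ∈ S) := by
    intro a b hab hne
    have hab' : G'.Adj a b := (deleteEdges_adj ..).mpr ⟨hab, hne⟩
    simp only [S, mem_filter, mem_univ, true_and]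
    exact ⟨fun hr => hr.trans hab'.reachable, fun hr => hr.trans hab'.symm.reachable⟩
  have hfilter : ∀ a b, {w ∈ S | w ∈ s(a, b)} = {w ∈ ({a, b} : Finset V) | w ∈ S} := by
    intro a b; ext w; simp only [mem_filter, Sym2.mem_iff, mem_insert, mem_singleton]; tauto
  have hterm : ∀ e ∈ D, #{w ∈ S | w ∈ e} % 2 = if s(u, v) = e then 1 else 0 := by
    intro e he
    induction e using Sym2.ind with
    | _ a b =>
    split_ifs with hae
    · rw [← hae, hfilter, filter_insert, filter_singleton, if_pos hu, if_neg hv]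
      rfl
    · have hab : G.Adj a b := hD he
      have hab_iff := hcross hab (Ne.symm hae)
      rw [hfilter, filter_insert, filter_singleton]
      by_cases ha : a ∈ S
      · rw [if_pos ha, if_pos (hab_iff.mp ha), card_pair hab.ne]
      · rw [if_neg ha, if_neg (hab_iff.not.mp ha)]
        rfl
  rw [show ∑ w ∈ S, #{e ∈ D | w ∈ e} = ∑ e ∈ D, #{w ∈ S | w ∈ e} from
    sum_card_bipartiteAbove_eq_sum_card_bipartiteBelow _, sum_nat_mod, sum_congr rfl hterm,
    sum_ite_eq]
  split_ifs <;> rfl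

theorem IsAcyclic.eq_of_card_incident_mod_two (hG : G.IsAcyclic) {D₁ D₂ : Finset (Sym2 V)}
    (h₁ : ↑D₁ ⊆ G.edgeSet) (h₂ : ↑D₂ ⊆ G.edgeSet)
    (h : ∀ v, #{e ∈ D₁ | v ∈ e} % 2 = #{e ∈ D₂ | v ∈ e} % 2) : D₁ = D₂ := by
  ext e
  induction e using Sym2.ind with
  | _ u v =>
  by_cases huv : G.Adj u v
  · obtain ⟨S, hS⟩ :=
      (isAcyclic_iff_forall_adj_isBridge.mp hG huv).exists_sum_card_incident_mod_two
    have hsum :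
        (∑ w ∈ S, #{e ∈ D₁ | w ∈ e}) % 2 = (∑ w ∈ S, #{e ∈ D₂ | w ∈ e}) % 2 := by
      rw [sum_nat_mod, sum_congr rfl fun w _ => h w, ← sum_nat_mod]
    rw [hS D₁ h₁, hS D₂ h₂] at hsum
    split_ifs at hsum <;> simp_all
  · exact iff_of_false (fun he => huv (h₁ he)) (fun he => huv (h₂ he))

end SimpleGraph

section PrimeGraph

variable {V : Type*} {f : V → ℕ}

def sym2Prod (f : V → ℕ) : Sym2 V → ℕ :=
  Sym2.lift ⟨fun u v => f u * f v, fun _ _ => mul_comm _ _⟩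

@[simp]
lemma sym2Prod_mk (u v : V) : sym2Prod f s(u, v) = f u * f v := rfl

lemma sym2Prod_injective (hf : Function.Injective f) (hfp : ∀ v, (f v).Prime) :
    Function.Injective (sym2Prod f) := by
  have hcancel : ∀ a b c d, f a * f b = f c * f d → a = c → b = d := by
    intro a b c d h hac
    subst hac
    exact hf (Nat.eq_of_mul_eq_mul_left (hfp a).pos h)
  intro e e'
  induction e using Sym2.ind with
  | _ a b =>
  induction e' using Sym2.ind with
  | _ c d =>
  intro h
  simp only [sym2Prod_mk] at h
  rcases (Nat.Prime.dvd_mul (hfp a)).mp (Dvd.intro _ h) with hdvd | hdvd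
  · have hac := hf ((Nat.prime_dvd_prime_iff_eq (hfp a) (hfp c)).mp hdvd)
    exact Sym2.eq_iff.mpr (Or.inl ⟨hac, hcancel a b c d h hac⟩)
  · have had := hf ((Nat.prime_dvd_prime_iff_eq (hfp a) (hfp d)).mp hdvd)
    exact Sym2.eq_iff.mpr (Or.inr ⟨had, hcancel a b d c (h.trans (mul_comm _ _)) had⟩)

lemma sym2Prod_not_prime (hfp : ∀ v, (f v).Prime) (e : Sym2 V) : ¬ (sym2Prod f e).Prime := by
  induction e using Sym2.ind with
  | _ u v => exact Nat.not_prime_mul (hfp u).one_lt.ne' (hfp v).one_lt.ne'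

lemma sym2Prod_ne_zero (hfp : ∀ v, (f v).Prime) (e : Sym2 V) : sym2Prod f e ≠ 0 := by
  induction e using Sym2.ind with
  | _ u v => exact mul_ne_zero (hfp u).ne_zero (hfp v).ne_zero

lemma factorization_sym2Prod_mk (hfp : ∀ v, (f v).Prime) (u v : V) (p : ℕ) :
    (sym2Prod f s(u, v)).factorization p =
      (if f u = p then 1 else 0) + (if f v = p then 1 else 0) := by
  rw [sym2Prod_mk, Nat.factorization_mul (hfp u).ne_zero (hfp v).ne_zero, Finsupp.add_apply,
    (hfp u).factorization, (hfp v).factorization, Finsupp.single_apply, Finsupp.single_apply]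

lemma factorization_sym2Prod_of_forall_ne (hfp : ∀ v, (f v).Prime) (e : Sym2 V) {p : ℕ}
    (hp : ∀ v, f v ≠ p) : (sym2Prod f e).factorization p = 0 := by
  induction e using Sym2.ind with
  | _ u v => rw [factorization_sym2Prod_mk hfp, if_neg (hp u), if_neg (hp v)]

lemma factorization_sym2Prod_apply [DecidableEq V] (hf : Function.Injective f)
    (hfp : ∀ v, (f v).Prime) (e : Sym2 V) (w : V) :
    (sym2Prod f e).factorization (f w) =
      (if e = s(w, w) then 2 else 0) + (if ¬e.IsDiag ∧ w ∈ e then 1 else 0) := by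
  induction e using Sym2.ind with
  | _ u v =>
    simp only [factorization_sym2Prod_mk hfp, hf.eq_iff]
    by_cases hu : u = w <;> by_cases hv : v = w <;> simp [hu, hv, Sym2.mk_isDiag_iff, Ne.symm]

-- The square `f v ^ 2` enters as the product over the diagonal pair `s(v, v)`.
def primeGraphSet (L : Set ℕ) (f : V → ℕ) (T : SimpleGraph V) : Set ℕ :=
  L ∪ sym2Prod f '' (Sym2.diagSet ∪ T.edgeSet)

variable {L : Set ℕ} {T : SimpleGraph V}

lemma mem_primeGraphSet {n : ℕ} :
    n ∈ primeGraphSet L f T ↔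
      n ∈ L ∨ (∃ v, n = f v ^ 2) ∨ ∃ u v, T.Adj u v ∧ n = f u * f v := by
  simp only [primeGraphSet, Set.mem_union, Set.mem_image, Sym2.exists, Sym2.mem_diagSet,
    Sym2.mk_isDiag_iff, SimpleGraph.mem_edgeSet, sym2Prod_mk, or_and_right, exists_or,
    exists_eq_left', sq, @eq_comm _ n]

lemma ne_zero_of_mem_primeGraphSet (hfp : ∀ v, (f v).Prime) (hL : ∀ p ∈ L, p.Prime) {b : ℕ}
    (hb : b ∈ primeGraphSet L f T) : b ≠ 0 := by
  rcases hb with hb | ⟨e, -, rfl⟩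
  · exact (hL b hb).ne_zero
  · exact sym2Prod_ne_zero hfp e

lemma sum_factorization_apply_of_mem (hfp : ∀ v, (f v).Prime) (hL : ∀ p ∈ L, p.Prime)
    (hLf : ∀ p ∈ L, ∀ v, f v ≠ p) {B : Finset ℕ} (hB : ↑B ⊆ primeGraphSet L f T)
    {p : ℕ} (hp : p ∈ L) : ∑ b ∈ B, b.factorization p = if p ∈ B then 1 else 0 := by
  have hterm : ∀ b ∈ B, b.factorization p = if b = p then 1 else 0 := by
    intro b hb
    rcases hB hb with hb | ⟨e, -, rfl⟩
    · rw [(hL b hb).factorization, Finsupp.single_apply]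
    · rw [factorization_sym2Prod_of_forall_ne hfp e (hLf p hp),
        if_neg fun h : sym2Prod f e = p => sym2Prod_not_prime hfp e (h ▸ hL p hp)]
  rw [sum_congr rfl hterm, sum_ite_eq']

lemma sum_factorization_apply_vertex [Fintype V] [DecidableEq V] (hf : Function.Injective f)
    (hfp : ∀ v, (f v).Prime) (hL : ∀ p ∈ L, p.Prime) (hLf : ∀ p ∈ L, ∀ v, f v ≠ p)
    {B : Finset ℕ} (hB : ↑B ⊆ primeGraphSet L f T) (w : V) :
    ∑ b ∈ B, b.factorization (f w) =
      (if f w ^ 2 ∈ B then 2 else 0) + #{e | ¬e.IsDiag ∧ sym2Prod f e ∈ B ∧ w ∈ e} := by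
  have hinj := sym2Prod_injective hf hfp
  have houtside : ∀ b ∈ B, b ∉ Set.range (sym2Prod f) → b.factorization (f w) = 0 := by
    intro b hb hbg
    rcases hB hb with hb | ⟨e, -, rfl⟩
    · rw [(hL b hb).factorization, Finsupp.single_apply, if_neg (hLf b hb w).symm]
    · exact absurd ⟨e, rfl⟩ hbg
  rw [← sum_preimage _ B hinj.injOn _ houtside,
    sum_congr rfl fun e _ => factorization_sym2Prod_apply hf hfp e w, sum_add_distrib,
    sum_ite_eq', ← card_filter]
  congr 2
  · simp [sq]
  · ext e
    simp only [mem_filter, mem_preimage, mem_univ, true_and]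
    tauto

lemma mem_edgeSet_of_sym2Prod_mem (hf : Function.Injective f) (hfp : ∀ v, (f v).Prime)
    (hL : ∀ p ∈ L, p.Prime) {e : Sym2 V} (he : ¬e.IsDiag)
    (hA : sym2Prod f e ∈ primeGraphSet L f T) : e ∈ T.edgeSet := by
  rcases hA with hA | ⟨e', he', he'e⟩
  · exact absurd (hL _ hA) (sym2Prod_not_prime hfp e)
  · rw [sym2Prod_injective hf hfp he'e] at he'
    exact he'.resolve_left he

theorem distinctSubsetProds_primeGraphSet [Fintype V] [DecidableEq V]
    (hf : Function.Injective f) (hfp : ∀ v, (f v).Prime) (hL : ∀ p ∈ L, p.Prime)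
    (hLf : ∀ p ∈ L, ∀ v, f v ≠ p) (hT : T.IsAcyclic) :
    DistinctSubsetProds (primeGraphSet L f T) := by
  intro B C hB hC hBC
  have hexp : ∀ p, ∑ b ∈ B, b.factorization p = ∑ c ∈ C, c.factorization p := by
    intro p
    rw [← Finsupp.finsetSum_apply, ← Finsupp.finsetSum_apply,
      ← Nat.factorization_prod fun b hb => ne_zero_of_mem_primeGraphSet hfp hL (hB hb),
      ← Nat.factorization_prod fun c hc => ne_zero_of_mem_primeGraphSet hfp hL (hC hc), hBC]
  have hexpL : ∀ p ∈ L, p ∈ B ↔ p ∈ C := by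
    intro p hp
    have h := hexp p
    rw [sum_factorization_apply_of_mem hfp hL hLf hB hp,
      sum_factorization_apply_of_mem hfp hL hLf hC hp] at h
    split_ifs at h <;> simp_all
  have hexpV : ∀ w,
      (if f w ^ 2 ∈ B then 2 else 0) + #{e | ¬e.IsDiag ∧ sym2Prod f e ∈ B ∧ w ∈ e} =
        (if f w ^ 2 ∈ C then 2 else 0) + #{e | ¬e.IsDiag ∧ sym2Prod f e ∈ C ∧ w ∈ e} := by
    intro w
    rw [← sum_factorization_apply_vertex hf hfp hL hLf hB,
      ← sum_factorization_apply_vertex hf hfp hL hLf hC, hexp]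
  have hedges : (({e | ¬e.IsDiag ∧ sym2Prod f e ∈ B} : Finset (Sym2 V)) =
      ({e | ¬e.IsDiag ∧ sym2Prod f e ∈ C} : Finset (Sym2 V))) := by
    have hsub : ∀ B' : Finset ℕ, ↑B' ⊆ primeGraphSet L f T →
        ↑({e | ¬e.IsDiag ∧ sym2Prod f e ∈ B'} : Finset (Sym2 V)) ⊆ T.edgeSet :=
      fun B' hB' e he => mem_edgeSet_of_sym2Prod_mem hf hfp hL (mem_filter.mp he).2.1
        (hB' (mem_filter.mp he).2.2)
    refine hT.eq_of_card_incident_mod_two (hsub B hB) (hsub C hC) fun w => ?_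
    have h := hexpV w
    simp only [filter_filter, and_assoc]
    split_ifs at h <;> omega
  have hsq : ∀ w, f w ^ 2 ∈ B ↔ f w ^ 2 ∈ C := by
    intro w
    have h := hexpV w
    have hcard := congrArg (fun D => #{e ∈ D | w ∈ e}) hedges
    simp only [filter_filter, and_assoc] at hcard
    split_ifs at h <;> simp_all
  have hmem : ∀ n ∈ primeGraphSet L f T, n ∈ B ↔ n ∈ C := by
    rintro n (hn | ⟨e, -, rfl⟩)
    · exact hexpL n hn
    · by_cases hd : e.IsDiag
      · induction e using Sym2.ind with
        | _ u v =>
          obtain rfl : u = v := Sym2.mk_isDiag_iff.mp hd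
          simpa [sq] using hsq u
      · simpa [hd] using congrArg (e ∈ ·) hedges
  ext n
  by_cases hn : n ∈ primeGraphSet L f T
  · exact hmem n hn
  · exact iff_of_false (fun h => hn (hB h)) (fun h => hn (hC h))

lemma primeGraphSet_subset_Icc (hfp : ∀ v, (f v).Prime) {N : ℕ} (hL : L ⊆ Set.Icc 1 N)
    (hfN : ∀ u v, f u * f v ≤ N) : primeGraphSet L f T ⊆ Set.Icc 1 N := by
  rintro n (hn | ⟨e, -, rfl⟩)
  · exact hL hn
  · induction e using Sym2.ind with
    | _ u v => exact ⟨Nat.one_le_iff_ne_zero.mpr (sym2Prod_ne_zero hfp s(u, v)), hfN u v⟩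

lemma ncard_primeGraphSet [Finite V] (hf : Function.Injective f) (hfp : ∀ v, (f v).Prime)
    (hL : ∀ p ∈ L, p.Prime) (hLfin : L.Finite) :
    (primeGraphSet L f T).ncard = L.ncard + Nat.card V + T.edgeSet.ncard := by
  have hLg : Disjoint L (sym2Prod f '' (Sym2.diagSet ∪ T.edgeSet)) := by
    rw [Set.disjoint_left]
    rintro _ hp ⟨e, -, rfl⟩
    exact sym2Prod_not_prime hfp e (hL _ hp)
  have hdiag : Disjoint (Sym2.diagSet : Set (Sym2 V)) T.edgeSet :=
    Set.disjoint_left.mpr fun e hd he => T.not_isDiag_of_mem_edgeSet he hd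
  rw [primeGraphSet, Set.ncard_union_eq hLg hLfin,
    Set.ncard_image_of_injective _ (sym2Prod_injective hf hfp), Set.ncard_union_eq hdiag,
    ← Sym2.range_diag, Set.ncard_range_of_injective Sym2.diag_injective, add_assoc]

end PrimeGraph

lemma SimpleGraph.IsTree.ncard_edgeSet_add_one {V : Type*} [Finite V] {T : SimpleGraph V}
    (hT : T.IsTree) : T.edgeSet.ncard + 1 = Nat.card V := by
  classical
  have := Fintype.ofFinite V
  rw [Set.ncard_eq_toFinset_card', Nat.card_eq_fintype_card, ← hT.card_edgeFinset]
  rfl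

lemma finite_setOf_natCast_le (x : ℝ) : {n : ℕ | (n : ℝ) ≤ x}.Finite :=
  (Set.finite_Iic ⌊x⌋₊).subset fun _ hn => Nat.le_floor hn

lemma primePi_eq_ncard_add_primePi {r x : ℝ} (hrx : r ≤ x) :
    primePi x = {p : ℕ | p.Prime ∧ r < p ∧ (p : ℝ) ≤ x}.ncard + primePi r := by
  have hdisj :
      Disjoint {p : ℕ | p.Prime ∧ r < p ∧ (p : ℝ) ≤ x} {p | p.Prime ∧ (p : ℝ) ≤ r} :=
    Set.disjoint_left.mpr fun _ hp hp' => hp.2.1.not_ge hp'.2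
  rw [primePi, primePi, ← Set.ncard_union_eq hdisj
    ((finite_setOf_natCast_le x).subset fun _ hp => hp.2.2)
    ((finite_setOf_natCast_le r).subset fun _ hp => hp.2)]
  congr 1
  ext p
  simp only [Set.mem_union, Set.mem_ofPred_eq]
  constructor
  · rintro ⟨hp, hpx⟩
    rcases lt_or_ge r p with hpr | hpr
    exacts [.inl ⟨hp, hpr, hpx⟩, .inr ⟨hp, hpr⟩]
  · rintro (⟨hp, -, hpx⟩ | ⟨hp, hpr⟩)
    exacts [⟨hp, hpx⟩, ⟨hp, hpr.trans hrx⟩]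

/-- Given a tree `T` whose vertices are the primes at most `N^{1/2}`, the set consisting
of the primes in `(N^{1/2}, N]`, the squares `p²` of primes `p ≤ N^{1/2}`, and the
products `p·q` over edges `{p, q}` of `T`, is a subset of `[N]` with distinct subset
products and has exactly `π(N) + π(N^{1/2}) − 1` elements. -/
theorem stmt18 (N : ℕ) (hN : 4 ≤ N)
    (T : SimpleGraph {p : ℕ // p.Prime ∧ (p : ℝ) ≤ (N : ℝ) ^ ((1 : ℝ) / 2)})
    (hT : T.IsTree) :
    ∀ A : Set ℕ,
      A = {n : ℕ | (n.Prime ∧ (N : ℝ) ^ ((1 : ℝ) / 2) < (n : ℝ) ∧ n ≤ N) ∨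
        (∃ p : ℕ, p.Prime ∧ (p : ℝ) ≤ (N : ℝ) ^ ((1 : ℝ) / 2) ∧ n = p ^ 2) ∨
        (∃ p q : {p : ℕ // p.Prime ∧ (p : ℝ) ≤ (N : ℝ) ^ ((1 : ℝ) / 2)},
          T.Adj p q ∧ n = (p : ℕ) * (q : ℕ))} →
      A ⊆ Set.Icc 1 N ∧ DistinctSubsetProds A ∧
        A.ncard + 1 = primePi N + primePi ((N : ℝ) ^ ((1 : ℝ) / 2)) := by
  classical
  intro A hA
  have hrr : (N : ℝ) ^ ((1 : ℝ) / 2) * (N : ℝ) ^ ((1 : ℝ) / 2) = N := by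
    rw [← Real.sqrt_eq_rpow, Real.mul_self_sqrt N.cast_nonneg]
  have hr0 : 0 ≤ (N : ℝ) ^ ((1 : ℝ) / 2) := Real.rpow_nonneg N.cast_nonneg _
  generalize (N : ℝ) ^ ((1 : ℝ) / 2) = r at T hT A hA hrr hr0 ⊢
  have hrN : r ≤ N := by nlinarith [show (4 : ℝ) ≤ N by exact_mod_cast hN]
  have : Fintype {p : ℕ // p.Prime ∧ (p : ℝ) ≤ r} :=
    ((finite_setOf_natCast_le r).subset fun _ hp => hp.2).fintype
  set L := {n : ℕ | n.Prime ∧ r < n ∧ n ≤ N}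
  have hA' : A = primeGraphSet L Subtype.val T := by
    ext n
    simp only [hA, mem_primeGraphSet, Set.mem_ofPred_eq, Subtype.exists, exists_prop, and_assoc, L]
  have hLf : ∀ p ∈ L, ∀ v : {p : ℕ // p.Prime ∧ (p : ℝ) ≤ r}, (v : ℕ) ≠ p :=
    fun _ hp v hv => hp.2.1.not_ge (hv ▸ v.2.2)
  subst hA'
  refine ⟨primeGraphSet_subset_Icc (fun v => v.2.1) (fun n hn => ⟨hn.1.one_lt.le, hn.2.2⟩)
    fun u v => ?_, distinctSubsetProds_primeGraphSet Subtype.val_injective (fun v => v.2.1)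
      (fun p hp => hp.1) hLf hT.isAcyclic, ?_⟩
  · exact_mod_cast (mul_le_mul u.2.2 v.2.2 (Nat.cast_nonneg _) hr0).trans hrr.le
  · have hpi : primePi r = Nat.card {p : ℕ // p.Prime ∧ (p : ℝ) ≤ r} :=
      (Nat.card_coe_set_eq _).symm
    rw [ncard_primeGraphSet Subtype.val_injective (fun v => v.2.1) (fun p hp => hp.1)
      ((Set.finite_Iic N).subset fun _ hn => hn.2.2), primePi_eq_ncard_add_primePi hrN, hpi,
      ← hT.ncard_edgeSet_add_one]
    simp only [Nat.cast_le, L]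
    ring
end

section
/- Let p, q, r be distinct primes. Then the 7-element set {p²q, p²r, p², qr, p³, q³, r³} has distinct subset products; that is, the 2⁷ products over subsets of this set are pairwise distinct. -/
private lemma fmulf {a b t : ℕ} (ha : a ≠ 0) (hb : b ≠ 0) :
    (a * b).factorization t = a.factorization t + b.factorization t := by
  rw [Nat.factorization_mul ha hb]; simp

private lemma fpow_self {s : ℕ} (hs : s.Prime) (n : ℕ) : (s ^ n).factorization s = n := by
  simp [hs.factorization_pow]

private lemma fpow_ne {s t : ℕ} (hs : s.Prime) (hne : s ≠ t) (n : ℕ) :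
    (s ^ n).factorization t = 0 := by
  simp [hs.factorization_pow, Finsupp.single_apply, hne]

private lemma fpr_self {s : ℕ} (hs : s.Prime) : s.factorization s = 1 := by
  simpa using fpow_self hs 1

private lemma fpr_ne {s t : ℕ} (hs : s.Prime) (hne : s ≠ t) : s.factorization t = 0 := by
  simpa using fpow_ne hs hne 1

private lemma fact_prod7 {a1 a2 a3 a4 a5 a6 a7 : ℕ} (h1 : a1 ≠ 0) (h2 : a2 ≠ 0)
    (h3 : a3 ≠ 0) (h4 : a4 ≠ 0) (h5 : a5 ≠ 0) (h6 : a6 ≠ 0) (h7 : a7 ≠ 0)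
    (e1 e2 e3 e4 e5 e6 e7 t : ℕ) :
    (a1 ^ e1 * (a2 ^ e2 * (a3 ^ e3 * (a4 ^ e4 * (a5 ^ e5 * (a6 ^ e6 * a7 ^ e7)))))).factorization t
      = e1 * a1.factorization t + (e2 * a2.factorization t + (e3 * a3.factorization t +
        (e4 * a4.factorization t + (e5 * a5.factorization t +
        (e6 * a6.factorization t + e7 * a7.factorization t))))) := by
  have p1 := pow_ne_zero e1 h1
  have p2 := pow_ne_zero e2 h2
  have p3 := pow_ne_zero e3 h3
  have p4 := pow_ne_zero e4 h4
  have p5 := pow_ne_zero e5 h5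
  have p6 := pow_ne_zero e6 h6
  have p7 := pow_ne_zero e7 h7
  rw [fmulf p1 (mul_ne_zero p2 (mul_ne_zero p3 (mul_ne_zero p4 (mul_ne_zero p5 (mul_ne_zero p6 p7))))),
      fmulf p2 (mul_ne_zero p3 (mul_ne_zero p4 (mul_ne_zero p5 (mul_ne_zero p6 p7)))),
      fmulf p3 (mul_ne_zero p4 (mul_ne_zero p5 (mul_ne_zero p6 p7))),
      fmulf p4 (mul_ne_zero p5 (mul_ne_zero p6 p7)),
      fmulf p5 (mul_ne_zero p6 p7),
      fmulf p6 p7]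
  simp [Nat.factorization_pow]

private lemma expand7 {a1 a2 a3 a4 a5 a6 a7 : ℕ}
    (h12 : a1 ≠ a2) (h13 : a1 ≠ a3) (h14 : a1 ≠ a4) (h15 : a1 ≠ a5) (h16 : a1 ≠ a6)
    (h17 : a1 ≠ a7) (h23 : a2 ≠ a3) (h24 : a2 ≠ a4) (h25 : a2 ≠ a5) (h26 : a2 ≠ a6)
    (h27 : a2 ≠ a7) (h34 : a3 ≠ a4) (h35 : a3 ≠ a5) (h36 : a3 ≠ a6) (h37 : a3 ≠ a7)
    (h45 : a4 ≠ a5) (h46 : a4 ≠ a6) (h47 : a4 ≠ a7) (h56 : a5 ≠ a6) (h57 : a5 ≠ a7)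
    (h67 : a6 ≠ a7)
    (D : Finset ℕ) (hD : D ⊆ {a1, a2, a3, a4, a5, a6, a7}) :
    ∏ b ∈ D, b = a1 ^ (if a1 ∈ D then 1 else 0) * (a2 ^ (if a2 ∈ D then 1 else 0) *
      (a3 ^ (if a3 ∈ D then 1 else 0) * (a4 ^ (if a4 ∈ D then 1 else 0) *
      (a5 ^ (if a5 ∈ D then 1 else 0) * (a6 ^ (if a6 ∈ D then 1 else 0) *
      a7 ^ (if a7 ∈ D then 1 else 0)))))) := by
  have hDf : D = Finset.filter (· ∈ D) {a1, a2, a3, a4, a5, a6, a7} := by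
    rw [Finset.filter_mem_eq_inter, Finset.inter_eq_right.mpr hD]
  conv_lhs => rw [hDf]
  rw [Finset.prod_filter,
      Finset.prod_insert (by simp [h12, h13, h14, h15, h16, h17]),
      Finset.prod_insert (by simp [h23, h24, h25, h26, h27]),
      Finset.prod_insert (by simp [h34, h35, h36, h37]),
      Finset.prod_insert (by simp [h45, h46, h47]),
      Finset.prod_insert (by simp [h56, h57]),
      Finset.prod_insert (by simp [h67]),
      Finset.prod_singleton]
  simp only [pow_ite, pow_one, pow_zero]

private lemma boolvec7 {x1 x2 x3 x4 x5 x6 x7 y1 y2 y3 y4 y5 y6 y7 : ℕ}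
    (bx1 : x1 ≤ 1) (bx2 : x2 ≤ 1) (bx3 : x3 ≤ 1) (bx4 : x4 ≤ 1) (bx5 : x5 ≤ 1)
    (bx6 : x6 ≤ 1) (bx7 : x7 ≤ 1) (by1 : y1 ≤ 1) (by2 : y2 ≤ 1) (by3 : y3 ≤ 1)
    (by4 : y4 ≤ 1) (by5 : y5 ≤ 1) (by6 : y6 ≤ 1) (by7 : y7 ≤ 1)
    (hP : x1 * 2 + (x2 * 2 + (x3 * 2 + (x4 * 0 + (x5 * 3 + (x6 * 0 + x7 * 0)))))
        = y1 * 2 + (y2 * 2 + (y3 * 2 + (y4 * 0 + (y5 * 3 + (y6 * 0 + y7 * 0))))))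
    (hQ : x1 * 1 + (x2 * 0 + (x3 * 0 + (x4 * 1 + (x5 * 0 + (x6 * 3 + x7 * 0)))))
        = y1 * 1 + (y2 * 0 + (y3 * 0 + (y4 * 1 + (y5 * 0 + (y6 * 3 + y7 * 0))))))
    (hR : x1 * 0 + (x2 * 1 + (x3 * 0 + (x4 * 1 + (x5 * 0 + (x6 * 0 + x7 * 3)))))
        = y1 * 0 + (y2 * 1 + (y3 * 0 + (y4 * 1 + (y5 * 0 + (y6 * 0 + y7 * 3)))))) :
    x1 = y1 ∧ x2 = y2 ∧ x3 = y3 ∧ x4 = y4 ∧ x5 = y5 ∧ x6 = y6 ∧ x7 = y7 := by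
  have e5 : x5 = y5 := by omega
  have e6 : x6 = y6 := by omega
  have e7 : x7 = y7 := by omega
  refine ⟨by omega, by omega, by omega, by omega, e5, e6, e7⟩

set_option maxHeartbeats 1000000 in
/-- For distinct primes `p, q, r`, the `7`-element set
`{p²q, p²r, p², qr, p³, q³, r³}` has distinct subset products. -/
theorem stmt19 (p q r : ℕ) (hp : p.Prime) (hq : q.Prime) (hr : r.Prime)
    (hpq : p ≠ q) (hpr : p ≠ r) (hqr : q ≠ r) :
    ({p ^ 2 * q, p ^ 2 * r, p ^ 2, q * r, p ^ 3, q ^ 3, r ^ 3} : Set ℕ).ncard = 7 ∧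
      DistinctSubsetProds ({p ^ 2 * q, p ^ 2 * r, p ^ 2, q * r, p ^ 3, q ^ 3, r ^ 3} : Set ℕ) := by
  have hp0 : p ≠ 0 := hp.pos.ne'
  have hq0 : q ≠ 0 := hq.pos.ne'
  have hr0 : r ≠ 0 := hr.pos.ne'
  have hqp : q ≠ p := hpq.symm
  have hrp : r ≠ p := hpr.symm
  have hrq : r ≠ q := hqr.symm
  -- nonzeroness of the seven elements
  have A1 : p ^ 2 * q ≠ 0 := mul_ne_zero (pow_ne_zero _ hp0) hq0
  have A2 : p ^ 2 * r ≠ 0 := mul_ne_zero (pow_ne_zero _ hp0) hr0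
  have A3 : p ^ 2 ≠ 0 := pow_ne_zero _ hp0
  have A4 : q * r ≠ 0 := mul_ne_zero hq0 hr0
  have A5 : p ^ 3 ≠ 0 := pow_ne_zero _ hp0
  have A6 : q ^ 3 ≠ 0 := pow_ne_zero _ hq0
  have A7 : r ^ 3 ≠ 0 := pow_ne_zero _ hr0
  -- factorization values
  have f1p : (p ^ 2 * q).factorization p = 2 := by
    rw [fmulf A3 hq0, fpow_self hp, fpr_ne hq hqp]
  have f1q : (p ^ 2 * q).factorization q = 1 := by
    rw [fmulf A3 hq0, fpow_ne hp hpq, fpr_self hq]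
  have f1r : (p ^ 2 * q).factorization r = 0 := by
    rw [fmulf A3 hq0, fpow_ne hp hpr, fpr_ne hq hqr]
  have f2p : (p ^ 2 * r).factorization p = 2 := by
    rw [fmulf A3 hr0, fpow_self hp, fpr_ne hr hrp]
  have f2q : (p ^ 2 * r).factorization q = 0 := by
    rw [fmulf A3 hr0, fpow_ne hp hpq, fpr_ne hr hrq]
  have f2r : (p ^ 2 * r).factorization r = 1 := by
    rw [fmulf A3 hr0, fpow_ne hp hpr, fpr_self hr]
  have f3p : (p ^ 2).factorization p = 2 := fpow_self hp 2
  have f3q : (p ^ 2).factorization q = 0 := fpow_ne hp hpq 2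
  have f3r : (p ^ 2).factorization r = 0 := fpow_ne hp hpr 2
  have f4p : (q * r).factorization p = 0 := by
    rw [fmulf hq0 hr0, fpr_ne hq hqp, fpr_ne hr hrp]
  have f4q : (q * r).factorization q = 1 := by
    rw [fmulf hq0 hr0, fpr_self hq, fpr_ne hr hrq]
  have f4r : (q * r).factorization r = 1 := by
    rw [fmulf hq0 hr0, fpr_ne hq hqr, fpr_self hr]
  have f5p : (p ^ 3).factorization p = 3 := fpow_self hp 3
  have f5q : (p ^ 3).factorization q = 0 := fpow_ne hp hpq 3
  have f5r : (p ^ 3).factorization r = 0 := fpow_ne hp hpr 3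
  have f6p : (q ^ 3).factorization p = 0 := fpow_ne hq hqp 3
  have f6q : (q ^ 3).factorization q = 3 := fpow_self hq 3
  have f6r : (q ^ 3).factorization r = 0 := fpow_ne hq hqr 3
  have f7p : (r ^ 3).factorization p = 0 := fpow_ne hr hrp 3
  have f7q : (r ^ 3).factorization q = 0 := fpow_ne hr hrq 3
  have f7r : (r ^ 3).factorization r = 3 := fpow_self hr 3
  -- pairwise distinctness
  have n12 : p ^ 2 * q ≠ p ^ 2 * r := by
    intro h; apply_fun (fun n => n.factorization q) at h; rw [f1q, f2q] at h; omega
  have n13 : p ^ 2 * q ≠ p ^ 2 := by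
    intro h; apply_fun (fun n => n.factorization q) at h; rw [f1q, f3q] at h; omega
  have n14 : p ^ 2 * q ≠ q * r := by
    intro h; apply_fun (fun n => n.factorization p) at h; rw [f1p, f4p] at h; omega
  have n15 : p ^ 2 * q ≠ p ^ 3 := by
    intro h; apply_fun (fun n => n.factorization p) at h; rw [f1p, f5p] at h; omega
  have n16 : p ^ 2 * q ≠ q ^ 3 := by
    intro h; apply_fun (fun n => n.factorization p) at h; rw [f1p, f6p] at h; omega
  have n17 : p ^ 2 * q ≠ r ^ 3 := by
    intro h; apply_fun (fun n => n.factorization p) at h; rw [f1p, f7p] at h; omega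
  have n23 : p ^ 2 * r ≠ p ^ 2 := by
    intro h; apply_fun (fun n => n.factorization r) at h; rw [f2r, f3r] at h; omega
  have n24 : p ^ 2 * r ≠ q * r := by
    intro h; apply_fun (fun n => n.factorization p) at h; rw [f2p, f4p] at h; omega
  have n25 : p ^ 2 * r ≠ p ^ 3 := by
    intro h; apply_fun (fun n => n.factorization p) at h; rw [f2p, f5p] at h; omega
  have n26 : p ^ 2 * r ≠ q ^ 3 := by
    intro h; apply_fun (fun n => n.factorization p) at h; rw [f2p, f6p] at h; omega
  have n27 : p ^ 2 * r ≠ r ^ 3 := by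
    intro h; apply_fun (fun n => n.factorization p) at h; rw [f2p, f7p] at h; omega
  have n34 : p ^ 2 ≠ q * r := by
    intro h; apply_fun (fun n => n.factorization p) at h; rw [f3p, f4p] at h; omega
  have n35 : p ^ 2 ≠ p ^ 3 := by
    intro h; apply_fun (fun n => n.factorization p) at h; rw [f3p, f5p] at h; omega
  have n36 : p ^ 2 ≠ q ^ 3 := by
    intro h; apply_fun (fun n => n.factorization p) at h; rw [f3p, f6p] at h; omega
  have n37 : p ^ 2 ≠ r ^ 3 := by
    intro h; apply_fun (fun n => n.factorization p) at h; rw [f3p, f7p] at h; omega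
  have n45 : q * r ≠ p ^ 3 := by
    intro h; apply_fun (fun n => n.factorization p) at h; rw [f4p, f5p] at h; omega
  have n46 : q * r ≠ q ^ 3 := by
    intro h; apply_fun (fun n => n.factorization q) at h; rw [f4q, f6q] at h; omega
  have n47 : q * r ≠ r ^ 3 := by
    intro h; apply_fun (fun n => n.factorization r) at h; rw [f4r, f7r] at h; omega
  have n56 : p ^ 3 ≠ q ^ 3 := by
    intro h; apply_fun (fun n => n.factorization p) at h; rw [f5p, f6p] at h; omega
  have n57 : p ^ 3 ≠ r ^ 3 := by
    intro h; apply_fun (fun n => n.factorization p) at h; rw [f5p, f7p] at h; omega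
  have n67 : q ^ 3 ≠ r ^ 3 := by
    intro h; apply_fun (fun n => n.factorization q) at h; rw [f6q, f7q] at h; omega
  have hset : ({p ^ 2 * q, p ^ 2 * r, p ^ 2, q * r, p ^ 3, q ^ 3, r ^ 3} : Set ℕ)
      = (({p ^ 2 * q, p ^ 2 * r, p ^ 2, q * r, p ^ 3, q ^ 3, r ^ 3} : Finset ℕ) : Set ℕ) := by
    simp
  constructor
  · rw [hset, Set.ncard_coe_finset]
    rw [Finset.card_insert_of_notMem (by simp [n12, n13, n14, n15, n16, n17]),
        Finset.card_insert_of_notMem (by simp [n23, n24, n25, n26, n27]),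
        Finset.card_insert_of_notMem (by simp [n34, n35, n36, n37]),
        Finset.card_insert_of_notMem (by simp [n45, n46, n47]),
        Finset.card_insert_of_notMem (by simp [n56, n57]),
        Finset.card_insert_of_notMem (by simp [n67]),
        Finset.card_singleton]
  · intro B C hB hC hprod
    have hBS : B ⊆ ({p ^ 2 * q, p ^ 2 * r, p ^ 2, q * r, p ^ 3, q ^ 3, r ^ 3} : Finset ℕ) :=
      fun x hx => by simpa using hB hx
    have hCS : C ⊆ ({p ^ 2 * q, p ^ 2 * r, p ^ 2, q * r, p ^ 3, q ^ 3, r ^ 3} : Finset ℕ) :=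
      fun x hx => by simpa using hC hx
    rw [expand7 n12 n13 n14 n15 n16 n17 n23 n24 n25 n26 n27 n34 n35 n36 n37 n45 n46 n47
          n56 n57 n67 B hBS,
        expand7 n12 n13 n14 n15 n16 n17 n23 n24 n25 n26 n27 n34 n35 n36 n37 n45 n46 n47
          n56 n57 n67 C hCS] at hprod
    obtain ⟨x1, bx1, hx1⟩ : ∃ x : ℕ, x ≤ 1 ∧ x = (if p ^ 2 * q ∈ B then 1 else 0) :=
      ⟨_, by split <;> simp, rfl⟩
    obtain ⟨x2, bx2, hx2⟩ : ∃ x : ℕ, x ≤ 1 ∧ x = (if p ^ 2 * r ∈ B then 1 else 0) :=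
      ⟨_, by split <;> simp, rfl⟩
    obtain ⟨x3, bx3, hx3⟩ : ∃ x : ℕ, x ≤ 1 ∧ x = (if p ^ 2 ∈ B then 1 else 0) :=
      ⟨_, by split <;> simp, rfl⟩
    obtain ⟨x4, bx4, hx4⟩ : ∃ x : ℕ, x ≤ 1 ∧ x = (if q * r ∈ B then 1 else 0) :=
      ⟨_, by split <;> simp, rfl⟩
    obtain ⟨x5, bx5, hx5⟩ : ∃ x : ℕ, x ≤ 1 ∧ x = (if p ^ 3 ∈ B then 1 else 0) :=
      ⟨_, by split <;> simp, rfl⟩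
    obtain ⟨x6, bx6, hx6⟩ : ∃ x : ℕ, x ≤ 1 ∧ x = (if q ^ 3 ∈ B then 1 else 0) :=
      ⟨_, by split <;> simp, rfl⟩
    obtain ⟨x7, bx7, hx7⟩ : ∃ x : ℕ, x ≤ 1 ∧ x = (if r ^ 3 ∈ B then 1 else 0) :=
      ⟨_, by split <;> simp, rfl⟩
    obtain ⟨y1, by1, hy1⟩ : ∃ x : ℕ, x ≤ 1 ∧ x = (if p ^ 2 * q ∈ C then 1 else 0) :=
      ⟨_, by split <;> simp, rfl⟩
    obtain ⟨y2, by2, hy2⟩ : ∃ x : ℕ, x ≤ 1 ∧ x = (if p ^ 2 * r ∈ C then 1 else 0) :=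
      ⟨_, by split <;> simp, rfl⟩
    obtain ⟨y3, by3, hy3⟩ : ∃ x : ℕ, x ≤ 1 ∧ x = (if p ^ 2 ∈ C then 1 else 0) :=
      ⟨_, by split <;> simp, rfl⟩
    obtain ⟨y4, by4, hy4⟩ : ∃ x : ℕ, x ≤ 1 ∧ x = (if q * r ∈ C then 1 else 0) :=
      ⟨_, by split <;> simp, rfl⟩
    obtain ⟨y5, by5, hy5⟩ : ∃ x : ℕ, x ≤ 1 ∧ x = (if p ^ 3 ∈ C then 1 else 0) :=
      ⟨_, by split <;> simp, rfl⟩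
    obtain ⟨y6, by6, hy6⟩ : ∃ x : ℕ, x ≤ 1 ∧ x = (if q ^ 3 ∈ C then 1 else 0) :=
      ⟨_, by split <;> simp, rfl⟩
    obtain ⟨y7, by7, hy7⟩ : ∃ x : ℕ, x ≤ 1 ∧ x = (if r ^ 3 ∈ C then 1 else 0) :=
      ⟨_, by split <;> simp, rfl⟩
    have hP := congrArg (fun n : ℕ => n.factorization p) hprod
    have hQ := congrArg (fun n : ℕ => n.factorization q) hprod
    have hR := congrArg (fun n : ℕ => n.factorization r) hprod
    simp only [fact_prod7 A1 A2 A3 A4 A5 A6 A7, f1p, f2p, f3p, f4p, f5p, f6p, f7p,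
      ← hx1, ← hx2, ← hx3, ← hx4, ← hx5, ← hx6, ← hx7,
      ← hy1, ← hy2, ← hy3, ← hy4, ← hy5, ← hy6, ← hy7] at hP
    simp only [fact_prod7 A1 A2 A3 A4 A5 A6 A7, f1q, f2q, f3q, f4q, f5q, f6q, f7q,
      ← hx1, ← hx2, ← hx3, ← hx4, ← hx5, ← hx6, ← hx7,
      ← hy1, ← hy2, ← hy3, ← hy4, ← hy5, ← hy6, ← hy7] at hQ
    simp only [fact_prod7 A1 A2 A3 A4 A5 A6 A7, f1r, f2r, f3r, f4r, f5r, f6r, f7r,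
      ← hx1, ← hx2, ← hx3, ← hx4, ← hx5, ← hx6, ← hx7,
      ← hy1, ← hy2, ← hy3, ← hy4, ← hy5, ← hy6, ← hy7] at hR
    obtain ⟨e1, e2, e3, e4, e5, e6, e7⟩ := boolvec7 bx1 bx2 bx3 bx4 bx5 bx6 bx7
      by1 by2 by3 by4 by5 by6 by7 hP hQ hR
    rw [hx1, hy1] at e1
    rw [hx2, hy2] at e2
    rw [hx3, hy3] at e3
    rw [hx4, hy4] at e4
    rw [hx5, hy5] at e5
    rw [hx6, hy6] at e6
    rw [hx7, hy7] at e7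
    have m1 : p ^ 2 * q ∈ B ↔ p ^ 2 * q ∈ C := by
      constructor <;> intro h <;> by_contra h' <;> simp [h, h'] at e1
    have m2 : p ^ 2 * r ∈ B ↔ p ^ 2 * r ∈ C := by
      constructor <;> intro h <;> by_contra h' <;> simp [h, h'] at e2
    have m3 : p ^ 2 ∈ B ↔ p ^ 2 ∈ C := by
      constructor <;> intro h <;> by_contra h' <;> simp [h, h'] at e3
    have m4 : q * r ∈ B ↔ q * r ∈ C := by
      constructor <;> intro h <;> by_contra h' <;> simp [h, h'] at e4
    have m5 : p ^ 3 ∈ B ↔ p ^ 3 ∈ C := by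
      constructor <;> intro h <;> by_contra h' <;> simp [h, h'] at e5
    have m6 : q ^ 3 ∈ B ↔ q ^ 3 ∈ C := by
      constructor <;> intro h <;> by_contra h' <;> simp [h, h'] at e6
    have m7 : r ^ 3 ∈ B ↔ r ^ 3 ∈ C := by
      constructor <;> intro h <;> by_contra h' <;> simp [h, h'] at e7
    refine Finset.ext fun a => ⟨fun ha => ?_, fun ha => ?_⟩
    · have haS := hBS ha
      simp only [Finset.mem_insert, Finset.mem_singleton] at haS
      rcases haS with h | h | h | h | h | h | h <;> subst h
      exacts [m1.mp ha, m2.mp ha, m3.mp ha, m4.mp ha, m5.mp ha, m6.mp ha, m7.mp ha]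
    · have haS := hCS ha
      simp only [Finset.mem_insert, Finset.mem_singleton] at haS
      rcases haS with h | h | h | h | h | h | h <;> subst h
      exacts [m1.mpr ha, m2.mpr ha, m3.mpr ha, m4.mpr ha, m5.mpr ha, m6.mpr ha, m7.mpr ha]
end
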